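/- Let X be a binomial random variable with t trials and success probability 1/2. For every ε ∈ (0, 1/2] with ε²t ≥ 6, it holds that Pr[X ≤ (t/2)(1−ε)] ≥ exp(−9ε²t/2). -/

import Mathlib

/-!
Let `m = ⌊t/2⌋` and `M = m + 1`. The event contains the window `m - ⌊εt⌋ ≤ i ≤ m - ⌈εt/2⌉`, of
length `r` with `t ≤ 4r²`, and on it every binomial coefficient is at least `C(t, m - ⌊εt⌋)`.
Comparing the ratios `(M - k)/(M + k)` of consecutive coefficients with the integral of
`log ((M - x)/(M + x))`, and bounding that integral by `(1 ± δ) log (1 ± δ)` estimates, gives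
`C(t, m - j) ≥ C(t, m) exp(-3(j+1)²/(2M))`. Together with `2^t ≤ 2√t C(t, m)` the window has
probability at least `exp(-3(εt+1)²/t) / 4 ≥ exp(-9ε²t/2)`.
-/

open MeasureTheory Real

open scoped ENNReal

theorem mul_log_add_log_add_one_mul_sub_le {x y : ℝ} (hx : 0 < x) (hy : 0 ≤ y) :
    x * log x + (log x + 1) * (y - x) ≤ y * log y := by
  rcases hy.eq_or_lt with rfl | hy
  · nlinarith
  · have h := mul_le_mul_of_nonneg_left (log_le_sub_one_of_pos (div_pos hx hy)) hy.le
    rw [log_div hx.ne' hy.ne', mul_sub_one, mul_div_cancel₀ _ hy.ne'] at h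
    linarith

theorem mul_log_le_mul_log_add_sq_sub_sq_div {M y : ℝ} (hM : 0 < M) (hMy : M ≤ y) :
    y * log y ≤ y * log M + (y ^ 2 - M ^ 2) / (2 * M) := by
  have hy : 0 < y := hM.trans_le hMy
  have hu : 0 < y / M := div_pos hy hM
  -- `log u ≤ sinh (log u) = (u - u⁻¹) / 2` for `u = y / M ≥ 1`
  have h := self_le_sinh_iff.mpr (log_nonneg ((one_le_div hM).mpr hMy))
  rw [sinh_log hu, log_div hy.ne' hM.ne'] at h
  have h' := mul_le_mul_of_nonneg_left h hy.le
  have e : y * ((y / M - (y / M)⁻¹) / 2) = (y ^ 2 - M ^ 2) / (2 * M) := by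
    field_simp
  linarith

theorem mul_log_le_mul_log_add_mul_sub_div {M y : ℝ} (hM : 0 < M) (hy : 0 ≤ y) :
    y * log y ≤ y * log M + y * (y - M) / M := by
  rcases hy.eq_or_lt with rfl | hy
  · simp
  · have h := mul_le_mul_of_nonneg_left (log_le_sub_one_of_pos (div_pos hy hM)) hy.le
    rw [log_div hy.ne' hM.ne'] at h
    have e : y * (y / M - 1) = y * (y - M) / M := by field_simp
    linarith

/-- An antiderivative of `x ↦ log (M + x) - log (M - x)`. -/
noncomputable def mulLogPair (M x : ℝ) : ℝ := (M + x) * log (M + x) + (M - x) * log (M - x)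

theorem log_sub_log_le_mulLogPair_add_one_sub {M x : ℝ} (hx : 0 ≤ x) (hxM : x + 1 ≤ M) :
    log (M + x) - log (M - x) ≤ mulLogPair M (x + 1) - mulLogPair M x := by
  have h₁ := mul_log_add_log_add_one_mul_sub_le (x := M + x) (y := M + (x + 1))
    (by linarith) (by linarith)
  have h₂ := mul_log_add_log_add_one_mul_sub_le (x := M - x) (y := M - (x + 1))
    (by linarith) (by linarith)
  unfold mulLogPair
  linear_combination h₁ + h₂

theorem mulLogPair_le {M x : ℝ} (hM : 0 < M) (hx : 0 ≤ x) (hxM : x ≤ M) :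
    mulLogPair M x ≤ 2 * M * log M + 3 / 2 * x ^ 2 / M := calc
  mulLogPair M x ≤ (M + x) * log M + ((M + x) ^ 2 - M ^ 2) / (2 * M) +
      ((M - x) * log M + (M - x) * (M - x - M) / M) :=
    add_le_add (mul_log_le_mul_log_add_sq_sub_sq_div hM (le_add_of_nonneg_right hx))
      (mul_log_le_mul_log_add_mul_sub_div hM (sub_nonneg.mpr hxM))
  _ = 2 * M * log M + 3 / 2 * x ^ 2 / M := by field_simp; ring

theorem sixteen_pow_le_four_mul_mul_centralBinom_sq {n : ℕ} (hn : 0 < n) :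
    16 ^ n ≤ 4 * n * n.centralBinom ^ 2 := by
  induction n, hn using Nat.le_induction with
  | base => decide
  | succ n _ ih =>
    have h := Nat.succ_mul_centralBinom_succ n
    refine Nat.le_of_mul_le_mul_left (c := (n + 1) ^ 2) ?_ (by positivity)
    calc (n + 1) ^ 2 * 16 ^ (n + 1) = 16 * (n + 1) ^ 2 * 16 ^ n := by ring
      _ ≤ 16 * (n + 1) ^ 2 * (4 * n * n.centralBinom ^ 2) := by gcongr
      _ ≤ 16 * (n + 1) * (2 * n + 1) ^ 2 * n.centralBinom ^ 2 := by
        have : (n + 1) * (4 * n) ≤ (2 * n + 1) ^ 2 := by nlinarith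
        nlinarith [Nat.zero_le (n.centralBinom ^ 2)]
      _ = (n + 1) ^ 2 * (4 * (n + 1) * (n + 1).centralBinom ^ 2) := by
        rw [show (n + 1) ^ 2 * (4 * (n + 1) * (n + 1).centralBinom ^ 2) =
          4 * (n + 1) * ((n + 1) * (n + 1).centralBinom) ^ 2 by ring, h]
        ring

theorem four_pow_le_four_mul_mul_choose_half_sq {t : ℕ} (ht : 0 < t) :
    4 ^ t ≤ 4 * t * t.choose (t / 2) ^ 2 := by
  obtain ⟨n, rfl | rfl⟩ := Nat.even_or_odd' t
  · have h := sixteen_pow_le_four_mul_mul_centralBinom_sq (n := n) (by omega)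
    rw [Nat.centralBinom_eq_two_mul_choose] at h
    rw [show 2 * n / 2 = n by omega, pow_mul]
    calc (4 ^ 2) ^ n = 16 ^ n := by norm_num
      _ ≤ 4 * n * (2 * n).choose n ^ 2 := h
      _ ≤ 4 * (2 * n) * (2 * n).choose n ^ 2 := by gcongr; omega
  · have h := sixteen_pow_le_four_mul_mul_centralBinom_sq (n := n + 1) (by omega)
    rw [Nat.centralBinom_eq_two_mul_choose, show 2 * (n + 1) = 2 * n + 1 + 1 by ring,
      Nat.choose_succ_succ, Nat.choose_symm_half] at h
    rw [show (2 * n + 1) / 2 = n by omega]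
    have : 4 ^ (2 * n + 1) * 4 = 16 ^ (n + 1) := by rw [pow_succ, pow_mul]; ring
    nlinarith [Nat.zero_le ((2 * n + 1).choose n ^ 2)]

theorem two_pow_le_four_mul_mul_choose_half {t r : ℕ} (ht : 0 < t) (hr : t ≤ 4 * r ^ 2) :
    2 ^ t ≤ 4 * r * t.choose (t / 2) := by
  refine (Nat.pow_le_pow_iff_left two_ne_zero).mp ?_
  calc (2 ^ t) ^ 2 = 4 ^ t := by rw [← pow_mul, mul_comm, pow_mul]; norm_num
    _ ≤ 4 * t * t.choose (t / 2) ^ 2 := four_pow_le_four_mul_mul_choose_half_sq ht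
    _ ≤ 4 * (4 * r ^ 2) * t.choose (t / 2) ^ 2 := by gcongr
    _ = (4 * r * t.choose (t / 2)) ^ 2 := by ring

theorem Nat.choose_le_choose_of_le_of_le_half {n a k : ℕ} (hak : a ≤ k) (hk : k ≤ n / 2) :
    n.choose a ≤ n.choose k := by
  induction k, hak using Nat.le_induction with
  | base => exact le_rfl
  | succ k _ ih => exact (ih (by omega)).trans (Nat.choose_le_succ_of_lt_half_left (by omega))

theorem choose_half_sub_mul_le (t j : ℕ) (hj : j < t / 2) :
    (t.choose (t / 2 - j) : ℝ) * (((t / 2 : ℕ) - j) / ((t / 2 : ℕ) + j + 2)) ≤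
      t.choose (t / 2 - (j + 1)) := by
  have key := Nat.choose_succ_right_eq t (t / 2 - (j + 1))
  rw [show t / 2 - (j + 1) + 1 = t / 2 - j by omega,
    show t - (t / 2 - (j + 1)) = t - t / 2 + j + 1 by omega] at key
  have hden : ((t - t / 2 + j + 1 : ℕ) : ℝ) ≤ (t / 2 : ℕ) + j + 2 := by
    have : t - t / 2 + j + 1 ≤ t / 2 + j + 2 := by omega
    exact_mod_cast this
  have hnum : (0 : ℝ) ≤ (t / 2 : ℕ) - j := by
    have : (j : ℝ) ≤ (t / 2 : ℕ) := by exact_mod_cast hj.le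
    linarith
  calc (t.choose (t / 2 - j) : ℝ) * (((t / 2 : ℕ) - j) / ((t / 2 : ℕ) + j + 2))
      ≤ t.choose (t / 2 - j) * (((t / 2 : ℕ) - j) / ((t - t / 2 + j + 1 : ℕ) : ℝ)) := by
        gcongr
    _ = t.choose (t / 2 - (j + 1)) := by
        rw [mul_div_assoc', div_eq_iff (by positivity), ← Nat.cast_sub hj.le]
        exact_mod_cast key

theorem choose_half_mul_exp_le (t j : ℕ) (hj : j ≤ t / 2) :
    (t.choose (t / 2) : ℝ) * exp (mulLogPair ((t / 2 : ℕ) + 1) 1 -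
      mulLogPair ((t / 2 : ℕ) + 1) (j + 1)) ≤ t.choose (t / 2 - j) := by
  induction j with
  | zero => simp
  | succ j ih =>
    set M : ℝ := (t / 2 : ℕ) + 1
    have hstep : exp (mulLogPair M (j + 1) - mulLogPair M (j + 1 + 1)) ≤
        ((t / 2 : ℕ) - j) / ((t / 2 : ℕ) + j + 2) := by
      have hjM : (j : ℝ) + 1 + 1 ≤ M := by
        have : ((j + 1 : ℕ) : ℝ) ≤ (t / 2 : ℕ) := by exact_mod_cast hj
        push_cast at this; linarith
      have h := log_sub_log_le_mulLogPair_add_one_sub (by positivity) hjM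
      have hlt : 0 < M - (j + 1) := by linarith
      calc exp (mulLogPair M (j + 1) - mulLogPair M (j + 1 + 1))
          ≤ exp (log ((M - (j + 1)) / (M + (j + 1)))) := by
            rw [log_div hlt.ne' (by positivity)]
            exact exp_le_exp.mpr (by linarith)
        _ = ((t / 2 : ℕ) - j) / ((t / 2 : ℕ) + j + 2) := by
            rw [exp_log (by positivity)]
            congr 1 <;> ring
    calc (t.choose (t / 2) : ℝ) * exp (mulLogPair M 1 - mulLogPair M ((j + 1 : ℕ) + 1))
        = (t.choose (t / 2) : ℝ) * exp (mulLogPair M 1 - mulLogPair M (j + 1)) *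
            exp (mulLogPair M (j + 1) - mulLogPair M (j + 1 + 1)) := by
          rw [mul_assoc, ← exp_add]; push_cast; ring_nf
      _ ≤ t.choose (t / 2 - j) * (((t / 2 : ℕ) - j) / ((t / 2 : ℕ) + j + 2)) := by
          gcongr
          exact ih (by omega)
      _ ≤ t.choose (t / 2 - (j + 1)) := choose_half_sub_mul_le t j (by omega)

theorem choose_half_mul_exp_neg_le (t j : ℕ) (hj : j ≤ t / 2) :
    (t.choose (t / 2) : ℝ) * exp (-(3 / 2 * ((j : ℝ) + 1) ^ 2 / ((t / 2 : ℕ) + 1))) ≤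
      t.choose (t / 2 - j) := by
  set M : ℝ := (t / 2 : ℕ) + 1
  have hjM : (j : ℝ) + 1 ≤ M := by
    have : (j : ℝ) ≤ (t / 2 : ℕ) := by exact_mod_cast hj
    linarith
  have h₀ := log_sub_log_le_mulLogPair_add_one_sub (M := M) le_rfl (by simp [M])
  have h₁ := mulLogPair_le (M := M) (x := j + 1) (by positivity) (by positivity) hjM
  refine (choose_half_mul_exp_le t j hj).trans' ?_
  gcongr
  simp only [add_zero, sub_zero, sub_self, zero_add, mulLogPair] at h₀ h₁ ⊢
  linarith

theorem PMF.binomial_half_apply (t : ℕ) (i : Fin (t + 1)) :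
    PMF.binomial (1 / 2) (by norm_num) t i = t.choose i / 2 ^ t := by
  rw [PMF.binomial_apply, Fin.val_last]
  simp only [one_div, ENNReal.coe_inv two_ne_zero, ENNReal.coe_ofNat, ENNReal.one_sub_inv_two]
  rw [← pow_add, Nat.add_sub_cancel' (Nat.lt_succ_iff.mp i.isLt), ← ENNReal.inv_pow,
    div_eq_mul_inv, mul_comm]

theorem card_mul_choose_div_le_binomial_half_toMeasure {t a b : ℕ} (hb : b ≤ t / 2) :
    ((b + 1 - a : ℕ) : ℝ≥0∞) * t.choose a / 2 ^ t ≤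
      (PMF.binomial (1 / 2) (by norm_num) t).toMeasure {i | (i : ℕ) ≤ b} := by
  set F := (Finset.Icc a b).attachFin (n := t + 1) (fun k hk => by
    rw [Finset.mem_Icc] at hk; omega)
  calc ((b + 1 - a : ℕ) : ℝ≥0∞) * t.choose a / 2 ^ t = ∑ _ ∈ F, (t.choose a : ℝ≥0∞) / 2 ^ t := by
        rw [Finset.sum_const, Finset.card_attachFin, Nat.card_Icc, nsmul_eq_mul, mul_div_assoc]
    _ ≤ ∑ i ∈ F, PMF.binomial (1 / 2) (by norm_num) t i := by
        refine Finset.sum_le_sum fun i hi => ?_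
        rw [Finset.mem_attachFin, Finset.mem_Icc] at hi
        rw [PMF.binomial_half_apply]
        gcongr
        exact Nat.choose_le_choose_of_le_of_le_half hi.1 (hi.2.trans hb)
    _ = (PMF.binomial (1 / 2) (by norm_num) t).toMeasure F := (PMF.toMeasure_apply_finset _ _).symm
    _ ≤ _ := by
        refine measure_mono fun i hi => ?_
        rw [Finset.mem_coe, Finset.mem_attachFin, Finset.mem_Icc] at hi
        exact hi.2

theorem exp_neg_mul_two_pow_le {t j₀ j₁ : ℕ} {L : ℝ} (ht : 0 < t) (hj₁ : j₁ ≤ t / 2)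
    (hr : t ≤ 4 * (j₁ + 1 - j₀) ^ 2)
    (hL : 3 / 2 * ((j₁ : ℝ) + 1) ^ 2 / ((t / 2 : ℕ) + 1) + 3 ≤ L) :
    exp (-L) * 2 ^ t ≤ ((j₁ + 1 - j₀ : ℕ) : ℝ) * t.choose (t / 2 - j₁) := by
  have hcentral : (2 : ℝ) ^ t ≤ 4 * ((j₁ + 1 - j₀ : ℕ) : ℝ) * t.choose (t / 2) := by
    exact_mod_cast two_pow_le_four_mul_mul_choose_half ht hr
  have hfour : 4 * exp (-L) ≤ exp (-(3 / 2 * ((j₁ : ℝ) + 1) ^ 2 / ((t / 2 : ℕ) + 1))) := by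
    calc 4 * exp (-L) ≤ exp 3 * exp (-L) := by
          gcongr; linarith [add_one_le_exp (3 : ℝ)]
      _ ≤ _ := by rw [← exp_add]; gcongr; linarith
  calc exp (-L) * 2 ^ t ≤ exp (-L) * (4 * ((j₁ + 1 - j₀ : ℕ) : ℝ) * t.choose (t / 2)) := by
        gcongr
    _ = ((j₁ + 1 - j₀ : ℕ) : ℝ) * (t.choose (t / 2) * (4 * exp (-L))) := by ring
    _ ≤ ((j₁ + 1 - j₀ : ℕ) : ℝ) * t.choose (t / 2 - j₁) := by
        gcongr
        exact (mul_le_mul_of_nonneg_left hfour (by positivity)).trans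
          (choose_half_mul_exp_neg_le t j₁ hj₁)

theorem exists_window_below_half {t : ℕ} {ε : ℝ} (hε : 0 < ε) (hε2 : ε ≤ 1 / 2)
    (h6 : 6 ≤ ε ^ 2 * t) :
    ∃ j₀ j₁ : ℕ, ε * t / 2 ≤ j₀ ∧ j₀ ≤ j₁ ∧ j₁ ≤ t / 2 ∧ t ≤ 4 * (j₁ + 1 - j₀) ^ 2 ∧
      3 / 2 * ((j₁ : ℝ) + 1) ^ 2 / ((t / 2 : ℕ) + 1) + 3 ≤ 9 * ε ^ 2 * t / 2 := by
  set x := ε * t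
  have ht : (0 : ℝ) < t := by nlinarith
  have hx : 12 ≤ x := by nlinarith
  have hx2 : 6 * t ≤ x ^ 2 := by nlinarith
  have hxt : x ≤ t / 2 := by nlinarith
  have hceil := Nat.ceil_lt_add_one (show 0 ≤ x / 2 by positivity)
  have hfloor := Nat.lt_floor_add_one x
  have hj₀₁ : ⌈x / 2⌉₊ ≤ ⌊x⌋₊ := Nat.ceil_le.mpr (by linarith)
  refine ⟨⌈x / 2⌉₊, ⌊x⌋₊, Nat.le_ceil _, hj₀₁, ?_, ?_, ?_⟩
  · rw [Nat.le_div_iff_mul_le two_pos]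
    have : (⌊x⌋₊ : ℝ) * 2 ≤ t := by linarith [Nat.floor_le (by positivity : 0 ≤ x)]
    exact_mod_cast this
  · have : (t : ℝ) ≤ 4 * ((⌊x⌋₊ + 1 - ⌈x / 2⌉₊ : ℕ) : ℝ) ^ 2 := by
      rw [Nat.cast_sub (by omega)]
      push_cast
      nlinarith
    exact_mod_cast this
  · have hM : (t : ℝ) / 2 ≤ (t / 2 : ℕ) + 1 := by
      have : t ≤ 2 * (t / 2) + 1 := by omega
      have : (t : ℝ) ≤ 2 * (t / 2 : ℕ) + 1 := by exact_mod_cast this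
      linarith
    calc 3 / 2 * ((⌊x⌋₊ : ℝ) + 1) ^ 2 / ((t / 2 : ℕ) + 1) + 3
        ≤ 3 / 2 * (x + 1) ^ 2 / (t / 2) + 3 := by
          gcongr
          linarith [Nat.floor_le (by positivity : 0 ≤ x)]
      _ ≤ 9 * ε ^ 2 * t / 2 := by
          rw [div_add' _ _ _ (by positivity), div_le_div_iff₀ (by positivity) (by positivity)]
          nlinarith

theorem reverse_chernoff_lower_tail (t : ℕ) (ε : ℝ) (hε : 0 < ε) (hε2 : ε ≤ 1/2)
    (h6 : ε ^ 2 * t ≥ 6) :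
    (PMF.binomial (1/2) (by norm_num) t).toMeasure
        {i : Fin (t + 1) | ((i : ℕ) : ℝ) ≤ (t / 2) * (1 - ε)} ≥
      ENNReal.ofReal (Real.exp (-(9 * ε ^ 2 * t) / 2)) := by
  have ht : 0 < t := Nat.pos_of_ne_zero (by rintro rfl; norm_num at h6)
  obtain ⟨j₀, j₁, hj₀, hj₀₁, hj₁, hr, hL⟩ := exists_window_below_half hε hε2 h6
  have hb : ((t / 2 - j₀ : ℕ) : ℝ) ≤ t / 2 * (1 - ε) := by
    rw [Nat.cast_sub (by omega)]
    linarith [Nat.cast_div_le (α := ℝ) (m := t) (n := 2)]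
  calc ENNReal.ofReal (exp (-(9 * ε ^ 2 * t) / 2))
      ≤ ENNReal.ofReal (((j₁ + 1 - j₀ : ℕ) : ℝ) * t.choose (t / 2 - j₁) / 2 ^ t) := by
        refine ENNReal.ofReal_le_ofReal ((le_div_iff₀ (by positivity)).mpr ?_)
        rw [neg_div]
        exact exp_neg_mul_two_pow_le ht hj₁ hr hL
    _ = ((t / 2 - j₀ + 1 - (t / 2 - j₁) : ℕ) : ℝ≥0∞) * t.choose (t / 2 - j₁) / 2 ^ t := by
        rw [show t / 2 - j₀ + 1 - (t / 2 - j₁) = j₁ + 1 - j₀ by omega,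
          ENNReal.ofReal_div_of_pos (by positivity), ENNReal.ofReal_mul (by positivity)]
        simp
    _ ≤ (PMF.binomial (1 / 2) (by norm_num) t).toMeasure {i | (i : ℕ) ≤ t / 2 - j₀} :=
        card_mul_choose_div_le_binomial_half_toMeasure (by omega)
    _ ≤ _ := measure_mono fun i (hi : (i : ℕ) ≤ t / 2 - j₀) => (Nat.cast_le.mpr hi).trans hb
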